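/- arXiv:1703.03036 — 2 statements merged into one kernel-verified Lean document; each statement's English description precedes it below -/
import Mathlib

section
/- The group of pairs (T,P) with T ∈ GL_{m+2}(ℤ), P a (2m+2)×(2m+2) permutation matrix, generated by the vertex-permutation symmetries and the vertex-swapping symmetries of the Lauricella F_C matrix A, has order at least 2^m · m!. -/
/-- The Lauricella `F_C` matrix `A = [[1,𝟏,1,𝟏],[1,𝟏,0,𝟎],[𝟎,I_m,𝟎,−I_m]]` of size
`(m+2) × (2m+2)`; rows are indexed by `Fin 2 ⊕ Fin m` and columns by
`(Unit ⊕ Fin m) ⊕ (Unit ⊕ Fin m)`. -/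
def lauricellaFC (m : ℕ) : Matrix (Fin 2 ⊕ Fin m) ((Unit ⊕ Fin m) ⊕ (Unit ⊕ Fin m)) ℤ :=
  Matrix.of fun r c =>
    match r with
    | Sum.inl k =>
        if k = 0 then 1
        else
          match c with
          | Sum.inl _ => 1
          | Sum.inr _ => 0
    | Sum.inr i =>
        match c with
        | Sum.inl (Sum.inr j) => if i = j then 1 else 0
        | Sum.inr (Sum.inr j) => if i = j then -1 else 0
        | _ => 0

/-- The permutation matrix of `σ`, with columns `e_{σ(1)},…,e_{σ(n)}`. -/
def permMat {α : Type*} [DecidableEq α] (σ : Equiv.Perm α) : Matrix α α ℤ :=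
  Matrix.of fun i j => if i = σ j then 1 else 0

/-- The matrix `T_k ∈ ℤ^{(m+2)×(m+2)}` which equals the identity except that
`T_k e_2 = e_2 − e_{k+2}` and `T_k e_{k+2} = −e_{k+2}`. -/
def Tswap (m : ℕ) (k : Fin m) : Matrix (Fin 2 ⊕ Fin m) (Fin 2 ⊕ Fin m) ℤ :=
  Matrix.of fun r c =>
    match r, c with
    | Sum.inl i, Sum.inl j => if i = j then 1 else 0
    | Sum.inr i, Sum.inl j => if j = 1 ∧ i = k then -1 else 0
    | Sum.inl _, Sum.inr _ => 0
    | Sum.inr i, Sum.inr j => if i = j then (if i = k then -1 else 1) else 0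

/-- The vertex-permutation symmetry pairs `(diag(1,1,Q), diag(1,Q⁻¹,1,Q⁻¹))` of the
Lauricella `F_C` matrix. -/
def vertexPermPair (m : ℕ) (σ : Equiv.Perm (Fin m)) :
    Matrix (Fin 2 ⊕ Fin m) (Fin 2 ⊕ Fin m) ℤ ×
      Matrix ((Unit ⊕ Fin m) ⊕ (Unit ⊕ Fin m)) ((Unit ⊕ Fin m) ⊕ (Unit ⊕ Fin m)) ℤ :=
  (Matrix.fromBlocks (1 : Matrix (Fin 2) (Fin 2) ℤ) 0 0 (permMat σ),
    Matrix.fromBlocks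
      (Matrix.fromBlocks (1 : Matrix Unit Unit ℤ) 0 0 (permMat σ⁻¹)) 0 0
      (Matrix.fromBlocks (1 : Matrix Unit Unit ℤ) 0 0 (permMat σ⁻¹)))

/-- The vertex-swapping symmetry pairs `(T_k, P_k)` of the Lauricella `F_C`
matrix. -/
def vertexSwapPair (m : ℕ) (k : Fin m) :
    Matrix (Fin 2 ⊕ Fin m) (Fin 2 ⊕ Fin m) ℤ ×
      Matrix ((Unit ⊕ Fin m) ⊕ (Unit ⊕ Fin m)) ((Unit ⊕ Fin m) ⊕ (Unit ⊕ Fin m)) ℤ :=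
  (Tswap m k, permMat (Equiv.swap (Sum.inl (Sum.inr k)) (Sum.inr (Sum.inr k))))

/-!
The first components of the generators are block matrices `[[I₂, 0], [C_s, D_s P_σ]]` for
`s ⊆ Fin m` and `σ ∈ S_m`, where `D_s` is the diagonal sign matrix negating the rows in `s` and
`C_s` has `-1` in the second column exactly at the rows in `s`. These matrices are closed under
multiplication (they realise the hyperoctahedral group `(ℤ/2)^m ⋊ S_m`) and are generated by the
`T_k` (`s = {k}`) together with the `diag(1, 1, Q_σ)`, so the first projection of the generated
monoid contains all `2^m · m!` of them. Since the second components are permutation matrices,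
the generated monoid is finite, and the bound follows.
-/

open Matrix Equiv
open scoped symmDiff

section SignedPermMat

variable {ι : Type*} [DecidableEq ι]

def signedPermMat (s : Finset ι) (σ : Perm ι) : Matrix (Fin 2 ⊕ ι) (Fin 2 ⊕ ι) ℤ :=
  fromBlocks 1 0 (of fun i j => if j = 1 ∧ i ∈ s then -1 else 0)
    (of fun i j => if i = σ j then (if i ∈ s then -1 else 1) else 0)

theorem signedPermMat_empty_one : signedPermMat (∅ : Finset ι) 1 = 1 := by
  rw [signedPermMat, ← fromBlocks_one]
  congr
  ext
  simp

theorem signedPermMat_injective :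
    Function.Injective fun p : Finset ι × Perm ι => signedPermMat p.1 p.2 := by
  rintro ⟨s, σ⟩ ⟨t, τ⟩ h
  have hst : s = t := by
    ext i
    have hi := congr_fun₂ h (Sum.inr i) (Sum.inl 1)
    simp only [signedPermMat, fromBlocks_apply₂₁, of_apply, true_and] at hi
    split_ifs at hi <;> simp_all
  subst hst
  have hστ : σ = τ := by
    ext j
    have hj := congr_fun₂ h (Sum.inr (σ j)) (Sum.inr j)
    simp only [signedPermMat, fromBlocks_apply₂₂, of_apply] at hj
    split_ifs at hj <;> simp_all
  rw [hστ]

variable [Fintype ι]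

theorem signedPermMat_mul (s t : Finset ι) (σ τ : Perm ι) :
    signedPermMat s σ * signedPermMat t τ =
      signedPermMat (s ∆ t.map σ.toEmbedding) (σ * τ) := by
  simp only [signedPermMat, fromBlocks_multiply, Matrix.mul_one, Matrix.mul_zero,
    Matrix.zero_mul, add_zero, zero_add]
  congr 1
  · ext i j
    rw [Matrix.add_apply, mul_apply, Fintype.sum_eq_single (σ.symm i) fun k hk => by
      simp [Ne.symm hk, ← Equiv.symm_apply_eq]]
    by_cases hj : j = 1 <;> by_cases hs : i ∈ s <;> by_cases ht : σ.symm i ∈ t <;>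
      simp [hj, hs, ht, Finset.mem_symmDiff]
  · ext i j
    rw [mul_apply, Fintype.sum_eq_single (τ j) fun k hk => by simp [hk]]
    by_cases h : i = σ (τ j)
    · subst h
      by_cases hs : σ (τ j) ∈ s <;> by_cases ht : τ j ∈ t <;> simp [hs, ht, Finset.mem_symmDiff]
    · simp [h]

theorem signedPermMat_insert_one {k : ι} {s : Finset ι} (hk : k ∉ s) :
    signedPermMat (insert k s) 1 = signedPermMat {k} 1 * signedPermMat s 1 := by
  rw [signedPermMat_mul, one_mul]
  congr
  ext i
  by_cases hi : i = k <;> simp [Finset.mem_symmDiff, hi, hk, Perm.one_def]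

variable (ι) in
def signedPermSubmonoid :
    Submonoid (Matrix (Fin 2 ⊕ ι) (Fin 2 ⊕ ι) ℤ) where
  carrier := Set.range fun p : Finset ι × Perm ι => signedPermMat p.1 p.2
  mul_mem' := by
    rintro _ _ ⟨⟨s, σ⟩, rfl⟩ ⟨⟨t, τ⟩, rfl⟩
    exact ⟨(s ∆ t.map σ.toEmbedding, σ * τ), (signedPermMat_mul s t σ τ).symm⟩
  one_mem' := ⟨(∅, 1), signedPermMat_empty_one⟩

instance : Finite (signedPermSubmonoid ι) := Set.finite_range _ |>.to_subtype

theorem card_signedPermSubmonoid :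
    Nat.card (signedPermSubmonoid ι) = 2 ^ Fintype.card ι * (Fintype.card ι).factorial := by
  calc Nat.card (signedPermSubmonoid ι) = Nat.card (Finset ι × Perm ι) :=
        Nat.card_range_of_injective signedPermMat_injective
    _ = _ := by simp [Nat.card_eq_fintype_card, Fintype.card_finset, Fintype.card_perm]

theorem signedPermSubmonoid_le_closure :
    signedPermSubmonoid ι ≤ Submonoid.closure
      (Set.range (signedPermMat ∅) ∪ Set.range fun k => signedPermMat {k} 1) := by
  set M := Submonoid.closure
    (Set.range (signedPermMat (ι := ι) ∅) ∪ Set.range fun k => signedPermMat {k} 1)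
  have hperm (σ : Perm ι) : signedPermMat ∅ σ ∈ M := Submonoid.subset_closure (.inl ⟨σ, rfl⟩)
  have hflip (s : Finset ι) : signedPermMat s 1 ∈ M := by
    induction s using Finset.induction_on with
    | empty => exact hperm 1
    | insert k s hk ih =>
      rw [signedPermMat_insert_one hk]
      exact M.mul_mem (Submonoid.subset_closure (.inr ⟨k, rfl⟩)) ih
  rintro _ ⟨⟨s, σ⟩, rfl⟩
  have hsplit : signedPermMat s 1 * signedPermMat ∅ σ = signedPermMat s σ := by
    rw [signedPermMat_mul, one_mul, Finset.map_empty, ← Finset.bot_eq_empty, symmDiff_bot]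
  show signedPermMat s σ ∈ M
  exact hsplit ▸ M.mul_mem (hflip s) (hperm σ)

end SignedPermMat

theorem permMat_eq_permMatrixHom {α : Type*} [DecidableEq α] [Fintype α] (σ : Perm α) :
    permMat σ = permMatrixHom σ := by
  ext i j
  simp [permMat, PEquiv.toMatrix_apply, ← Equiv.eq_symm_apply]

theorem fromBlocks_permMat {α β : Type*} [DecidableEq α] [DecidableEq β]
    (σ : Perm α) (τ : Perm β) :
    fromBlocks (permMat σ) 0 0 (permMat τ) = permMat (σ.sumCongr τ) := by
  ext (i | i) (j | j) <;> simp [permMat]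

def vertexSymmetryMonoid (m : ℕ) :
    Submonoid (Matrix (Fin 2 ⊕ Fin m) (Fin 2 ⊕ Fin m) ℤ ×
      Matrix ((Unit ⊕ Fin m) ⊕ (Unit ⊕ Fin m)) ((Unit ⊕ Fin m) ⊕ (Unit ⊕ Fin m)) ℤ) :=
  Submonoid.closure (Set.range (vertexPermPair m) ∪ Set.range (vertexSwapPair m))

theorem vertexPermPair_fst (m : ℕ) (σ : Perm (Fin m)) :
    (vertexPermPair m σ).1 = signedPermMat ∅ σ := by
  ext (i | i) (j | j) <;> simp [vertexPermPair, signedPermMat, permMat]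

theorem vertexPermPair_snd (m : ℕ) (σ : Perm (Fin m)) :
    (vertexPermPair m σ).2 = permMat ((sumCongr 1 σ⁻¹).sumCongr (sumCongr 1 σ⁻¹)) := by
  have h1 : (1 : Matrix Unit Unit ℤ) = permMat 1 := by
    rw [permMat_eq_permMatrixHom, map_one]
  simp only [vertexPermPair, h1, fromBlocks_permMat]

theorem vertexSwapPair_fst (m : ℕ) (k : Fin m) :
    (vertexSwapPair m k).1 = signedPermMat {k} 1 := by
  ext (i | i) (j | j) <;> simp [vertexSwapPair, Tswap, signedPermMat, one_apply]

theorem vertexSymmetryMonoid_le_prod (m : ℕ) :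
    vertexSymmetryMonoid m ≤
      (signedPermSubmonoid (Fin m)).prod (MonoidHom.mrange
        (permMatrixHom (n := (Unit ⊕ Fin m) ⊕ (Unit ⊕ Fin m)) (R := ℤ))) := by
  rw [vertexSymmetryMonoid, Submonoid.closure_le]
  rintro _ (⟨σ, rfl⟩ | ⟨k, rfl⟩)
  · exact ⟨⟨(∅, σ), (vertexPermPair_fst m σ).symm⟩,
      ⟨_, (permMat_eq_permMatrixHom _).symm.trans (vertexPermPair_snd m σ).symm⟩⟩
  · exact ⟨⟨({k}, 1), (vertexSwapPair_fst m k).symm⟩, ⟨_, (permMat_eq_permMatrixHom _).symm⟩⟩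

instance (m : ℕ) : Finite (vertexSymmetryMonoid m) :=
  have : Finite ((signedPermSubmonoid (Fin m)).prod (MonoidHom.mrange
        (permMatrixHom (n := (Unit ⊕ Fin m) ⊕ (Unit ⊕ Fin m)) (R := ℤ)))) :=
    .of_equiv _ (Submonoid.prodEquiv _ _).symm.toEquiv
  .of_injective _ (Submonoid.inclusion_injective (vertexSymmetryMonoid_le_prod m))

theorem signedPermSubmonoid_le_map_fst (m : ℕ) :
    signedPermSubmonoid (Fin m) ≤ (vertexSymmetryMonoid m).map (MonoidHom.fst _ _) := by
  rw [vertexSymmetryMonoid, MonoidHom.map_mclosure, Set.image_union, ← Set.range_comp,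
    ← Set.range_comp]
  convert signedPermSubmonoid_le_closure using 4
  · exact funext (vertexPermPair_fst m)
  · exact funext (vertexSwapPair_fst m)

/-- The group of pairs `(T,P)` generated by the vertex-permutation
symmetries and the vertex-swapping symmetries of the Lauricella `F_C` matrix has
order at least `2^m · m!`. -/
theorem stmt12 (m : ℕ) :
    2 ^ m * Nat.factorial m ≤
      Nat.card (Submonoid.closure
        (Set.range (vertexPermPair m) ∪ Set.range (vertexSwapPair m))) := by
  have hle := signedPermSubmonoid_le_map_fst m
  have : Finite ((vertexSymmetryMonoid m).map (MonoidHom.fst _ _)) :=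
    .of_surjective _ (MonoidHom.submonoidMap_surjective _ _)
  calc 2 ^ m * m.factorial = Nat.card (signedPermSubmonoid (Fin m)) := by
        simp [card_signedPermSubmonoid]
    _ ≤ Nat.card ((vertexSymmetryMonoid m).map (MonoidHom.fst _ _)) :=
        Nat.card_le_card_of_injective _ (Submonoid.inclusion_injective hle)
    _ ≤ Nat.card (vertexSymmetryMonoid m) :=
        Nat.card_le_card_of_surjective _ (MonoidHom.submonoidMap_surjective _ _)
end

section
/- Euler's integral representation: for real c > b > 0 and |x| < 1, B(b, c−b) · ₂F₁(a,b;c;x) = ∫₀¹ z^{b−1} (1−z)^{c−b−1} (1−xz)^{−a} dz, where B is the Beta function. -/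
/-- The real Gauss hypergeometric series. -/
noncomputable def gauss2F1Real (a b c x : ℝ) : ℝ :=
  ∑' n : ℕ,
    (ascPochhammer ℝ n).eval a * (ascPochhammer ℝ n).eval b /
      ((ascPochhammer ℝ n).eval c * (n.factorial : ℝ)) * x ^ n

/-- The Beta function `B(p,q) = ∫₀¹ t^{p−1} (1−t)^{q−1} dt`. -/
noncomputable def betaFn (p q : ℝ) : ℝ :=
  ∫ t in (0 : ℝ)..1, t ^ (p - 1) * (1 - t) ^ (q - 1)

/-!
Expand `(1 - x z) ^ (-a)` in its binomial series `∑ (a)ₙ / n! (x z)ⁿ` and integrate term by term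
against the Beta weight `z ^ (b - 1) (1 - z) ^ (c - b - 1)`; this is legitimate by dominated
convergence, because on `[0, 1]` the `n`-th term is bounded by the weight times `|(a)ₙ / n! xⁿ|`,
which is summable for `|x| < 1`. The `n`-th moment of the weight is `B(b + n, c - b)`, and
`B(b + n, c - b) = (b)ₙ / (c)ₙ · B(b, c - b)` because `B(p, q) = Γ(p) Γ(q) / Γ(p + q)` and
`Γ(s + n) = (s)ₙ Γ(s)`.
-/

open Nat Real MeasureTheory Set
open scoped Interval

lemma Ring.choose_add_natCast_sub_one_eq_ascPochhammer_div {K : Type*} [Field K] [CharZero K]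
    (a : K) (n : ℕ) : Ring.choose (a + n - 1) n = (ascPochhammer K n).eval a / n ! := by
  rw [← Ring.multichoose_eq, eq_div_iff (Nat.cast_ne_zero.mpr n.factorial_ne_zero), mul_comm,
    ← nsmul_eq_mul, Ring.factorial_nsmul_multichoose_eq_ascPochhammer,
    Polynomial.ascPochhammer_smeval_cast, Polynomial.ascPochhammer_smeval_eq_eval]

lemma Real.mem_eball_zero_one_of_abs_lt_one {t : ℝ} (ht : |t| < 1) :
    t ∈ Metric.eball (0 : ℝ) 1 := by
  simpa [enorm_eq_nnnorm, ← NNReal.coe_lt_one] using ht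

theorem Real.hasSum_one_sub_rpow_neg (a : ℝ) {t : ℝ} (ht : |t| < 1) :
    HasSum (fun n => (ascPochhammer ℝ n).eval a / n ! * t ^ n) ((1 - t) ^ (-a)) := by
  have h := (one_div_one_sub_rpow_hasFPowerSeriesOnBall_zero a).hasSum
    (mem_eball_zero_one_of_abs_lt_one ht)
  simpa [FormalMultilinearSeries.ofScalars_apply_eq,
    Ring.choose_add_natCast_sub_one_eq_ascPochhammer_div, mul_comm,
    Real.rpow_neg (by linarith [(abs_lt.mp ht).2] : 0 ≤ 1 - t)] using h

theorem Real.summable_abs_ascPochhammer_div_factorial_mul_pow (a : ℝ) {t : ℝ} (ht : |t| < 1) :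
    Summable (fun n => |(ascPochhammer ℝ n).eval a / n ! * t ^ n|) := by
  have h := one_div_one_sub_rpow_hasFPowerSeriesOnBall_zero a
  have := FormalMultilinearSeries.summable_norm_apply _
    (Metric.eball_subset_eball h.r_le (mem_eball_zero_one_of_abs_lt_one ht))
  simpa [FormalMultilinearSeries.ofScalars_apply_eq,
    Ring.choose_add_natCast_sub_one_eq_ascPochhammer_div, abs_div, mul_comm] using this

lemma ofReal_betaIntegrand (p q : ℝ) {x : ℝ} (hx : x ∈ Icc (0 : ℝ) 1) :
    ((x ^ (p - 1) * (1 - x) ^ (q - 1) : ℝ) : ℂ) =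
      (x : ℂ) ^ ((p : ℂ) - 1) * (1 - (x : ℂ)) ^ ((q : ℂ) - 1) := by
  push_cast [Complex.ofReal_cpow hx.1, Complex.ofReal_cpow (sub_nonneg.mpr hx.2)]
  rfl

lemma intervalIntegrable_betaIntegrand {p q : ℝ} (hp : 0 < p) (hq : 0 < q) :
    IntervalIntegrable (fun x : ℝ => x ^ (p - 1) * (1 - x) ^ (q - 1)) volume 0 1 := by
  have h := (Complex.betaIntegral_convergent (u := p) (v := q) (by simpa) (by simpa)).1.re
  rw [intervalIntegrable_iff_integrableOn_Ioc_of_le zero_le_one]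
  refine IntegrableOn.congr_fun h (fun x hx => ?_) measurableSet_Ioc
  simp [← ofReal_betaIntegrand p q (Ioc_subset_Icc_self hx)]

lemma betaFn_eq_beta {p q : ℝ} (hp : 0 < p) (hq : 0 < q) :
    betaFn p q = ProbabilityTheory.beta p q := by
  have h : (betaFn p q : ℂ) = Complex.betaIntegral p q := by
    rw [betaFn, ← intervalIntegral.integral_ofReal]
    refine intervalIntegral.integral_congr fun x hx => ?_
    rw [uIcc_of_le zero_le_one] at hx
    exact ofReal_betaIntegrand p q hx
  rw [ProbabilityTheory.beta_eq_betaIntegralReal p q hp hq, ← h, Complex.ofReal_re]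

lemma Real.Gamma_add_nat_eq_ascPochhammer_mul {s : ℝ} (hs : 0 < s) (n : ℕ) :
    Gamma (s + n) = (ascPochhammer ℝ n).eval s * Gamma s := by
  induction n with
  | zero => simp
  | succ n ih =>
    rw [Nat.cast_succ, ← add_assoc, Gamma_add_one (by positivity), ih,
      ascPochhammer_succ_eval]
    ring

lemma betaFn_add_nat {p q : ℝ} (hp : 0 < p) (hq : 0 < q) (n : ℕ) :
    betaFn (p + n) q =
      (ascPochhammer ℝ n).eval p / (ascPochhammer ℝ n).eval (p + q) * betaFn p q := by
  have hpq : 0 < p + q := by positivity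
  rw [betaFn_eq_beta (by positivity) hq, betaFn_eq_beta hp hq, ProbabilityTheory.beta,
    ProbabilityTheory.beta, add_right_comm, Gamma_add_nat_eq_ascPochhammer_mul hp,
    Gamma_add_nat_eq_ascPochhammer_mul hpq]
  have := (ascPochhammer_pos n _ hpq).ne'
  have := (Gamma_pos_of_pos hpq).ne'
  field_simp

lemma abs_mul_pow_le_abs {c z : ℝ} (hz : z ∈ Icc (0 : ℝ) 1) (n : ℕ) : |c * z ^ n| ≤ |c| := by
  rw [abs_mul, abs_pow, abs_of_nonneg hz.1]
  exact mul_le_of_le_one_right (abs_nonneg c) (pow_le_one₀ hz.1 hz.2)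

theorem hasSum_mul_betaFn_add_nat {p q : ℝ} (hp : 0 < p) (hq : 0 < q) {c : ℕ → ℝ}
    (hc : Summable fun n => |c n|) :
    HasSum (fun n => c n * betaFn (p + n) q)
      (∫ z in (0 : ℝ)..1, z ^ (p - 1) * (1 - z) ^ (q - 1) * ∑' n, c n * z ^ n) := by
  set w := fun z : ℝ => z ^ (p - 1) * (1 - z) ^ (q - 1)
  have hw := intervalIntegrable_betaIntegrand hp hq
  have hw_nonneg : ∀ z ∈ Icc (0 : ℝ) 1, 0 ≤ w z := fun z hz =>
    mul_nonneg (rpow_nonneg hz.1 _) (rpow_nonneg (sub_nonneg.mpr hz.2) _)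
  have hmoment (n : ℕ) : ∫ z in (0 : ℝ)..1, w z * (c n * z ^ n) = c n * betaFn (p + n) q := by
    rw [betaFn, ← intervalIntegral.integral_const_mul]
    refine intervalIntegral.integral_congr_ae (Filter.Eventually.of_forall fun z hz => ?_)
    rw [uIoc_of_le zero_le_one] at hz
    rw [add_sub_right_comm, rpow_add hz.1, rpow_natCast]
    ring
  have hIcc : Ι (0 : ℝ) 1 ⊆ Icc 0 1 := by
    rw [uIoc_of_le zero_le_one]
    exact Ioc_subset_Icc_self
  have h := intervalIntegral.hasSum_integral_of_dominated_convergence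
    (F := fun n z => w z * (c n * z ^ n)) (f := fun z => w z * ∑' n, c n * z ^ n)
    (fun n z => w z * |c n|) (fun n => by fun_prop)
    (fun n => Filter.Eventually.of_forall fun z hz => ?_)
    (Filter.Eventually.of_forall fun z _ => hc.mul_left (w z))
    (by simpa only [tsum_mul_left] using hw.mul_const _)
    (Filter.Eventually.of_forall fun z hz => ?_)
  · simpa only [hmoment] using h
  · rw [norm_mul, Real.norm_eq_abs, abs_of_nonneg (hw_nonneg z (hIcc hz))]
    exact mul_le_mul_of_nonneg_left (abs_mul_pow_le_abs (hIcc hz) n) (hw_nonneg z (hIcc hz))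
  · exact ((hc.of_norm_bounded fun n => abs_mul_pow_le_abs (hIcc hz) n).hasSum).mul_left (w z)

/-- Euler's integral representation: for real `c > b > 0` and
`|x| < 1`,
`B(b, c−b) ₂F₁(a,b;c;x) = ∫₀¹ z^{b−1} (1−z)^{c−b−1} (1−xz)^{−a} dz`. -/
theorem stmt16 (a b c x : ℝ) (hb : 0 < b) (hcb : b < c) (hx : |x| < 1) :
    betaFn b (c - b) * gauss2F1Real a b c x =
      ∫ z in (0 : ℝ)..1, z ^ (b - 1) * (1 - z) ^ (c - b - 1) * (1 - x * z) ^ (-a) := by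
  have hcb' : 0 < c - b := sub_pos.mpr hcb
  set coeff : ℕ → ℝ := fun n => (ascPochhammer ℝ n).eval a / n ! * x ^ n
  have hbinom : EqOn (fun z => (1 - x * z) ^ (-a)) (fun z => ∑' n, coeff n * z ^ n) [[0, 1]] := by
    intro z hz
    rw [uIcc_of_le zero_le_one] at hz
    have hxz : |x * z| < 1 := by
      rw [abs_mul]
      exact mul_lt_one_of_nonneg_of_lt_one_left (abs_nonneg x) hx
        (abs_le.mpr ⟨by linarith [hz.1], hz.2⟩)
    simp_rw [coeff, mul_assoc, ← mul_pow]
    exact (hasSum_one_sub_rpow_neg a hxz).tsum_eq.symm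
  rw [intervalIntegral.integral_congr fun z hz => congrArg _ (hbinom hz),
    ← (hasSum_mul_betaFn_add_nat hb hcb'
      (summable_abs_ascPochhammer_div_factorial_mul_pow a hx)).tsum_eq,
    gauss2F1Real, ← tsum_mul_left]
  refine tsum_congr fun n => ?_
  rw [betaFn_add_nat hb hcb', add_sub_cancel]
  have := (ascPochhammer_pos n c (hb.trans hcb)).ne'
  field_simp
end
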